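/- Let t ∈ ℝ and let γ : [t−1, t] → ℝ^d be a continuously differentiable curve that minimizes A^{W,b}_{t−1,t} with fixed endpoints modulo ℤ^d and satisfies, for every s ∈ [t−1, t], the Euler–Lagrange identity γ̇(t) = γ̇(s) + ∫_s^t ∇²F(γ(τ)) γ̇(τ) (W(τ) − W(t)) dτ + ∇F(γ(s))·(W(s) − W(t)). Then there is a constant c > 0, depending only on d, |b|, C₀, C₁ and C₂, such that |γ̇(t)| ≤ c·( 1 + max_{t−1 ≤ τ ≤ t} |W(τ) − W(t)|² ). -/

import Mathlib

/-!
Compare `γ` with the straight segment from `γ (t-1)` to the point of `γ t + ℤ^d` nearest to it.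
With `M = max |W τ - W t|`, the segment has action `O(1 + M)`, while the Lagrangian is bounded
below by `c |γ̇| - 2c²` with `c = O(1 + M)`; minimality therefore gives `∫ |γ̇| = O(1 + M)`.
At a point `s` where `|γ̇ s|` equals this mean, the Euler–Lagrange identity yields
`|γ̇ t| ≤ |γ̇ s| + C₂ M ∫ |γ̇| + C₁ M = O(1 + M²)`.
-/

open MeasureTheory Set Real RealInnerProductSpace

/-- `γ : [s,t] → ℝ^d` is absolutely continuous with (integrable) derivative `γ'`:
`γ τ = γ s + ∫_s^τ γ' u du` for all `τ ∈ [s,t]`. -/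
def IsACWith {d : ℕ} (γ γ' : ℝ → EuclideanSpace ℝ (Fin d)) (s t : ℝ) : Prop :=
  IntervalIntegrable γ' volume s t ∧
    ∀ τ ∈ Set.Icc s t, γ τ = γ s + ∫ u in s..τ, γ' u

/-- The action `A^{W,b}_{s,t}(γ) = ∫_s^t ((1/2)|γ̇ - b|² + ∇F(γ)·γ̇ (W(τ) - W(t)) - (1/2)|b|²) dτ
- F(γ(s)) (W(t) - W(s))`, expressed via the pair `(γ, γ')`. -/
noncomputable def actionB {d : ℕ} (F : EuclideanSpace ℝ (Fin d) → ℝ) (W : ℝ → ℝ)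
    (b : EuclideanSpace ℝ (Fin d)) (γ γ' : ℝ → EuclideanSpace ℝ (Fin d)) (s t : ℝ) : ℝ :=
  (∫ τ in s..t, ((1/2) * ‖γ' τ - b‖^2
      + ⟪gradient F (γ τ), γ' τ⟫ * (W τ - W t) - (1/2) * ‖b‖^2))
    - F (γ s) * (W t - W s)

/-- `max_{s ≤ τ ≤ t} |W(τ) - W(t)|`. -/
noncomputable def maxW (W : ℝ → ℝ) (s t : ℝ) : ℝ :=
  sSup ((fun τ => |W τ - W t|) '' Set.Icc s t)

/-- `v ∈ ℤ^d`. -/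
def IsIntVec {d : ℕ} (v : EuclideanSpace ℝ (Fin d)) : Prop :=
  ∀ i, ∃ k : ℤ, v i = (k : ℝ)

theorem ContDiff.gradient {E : Type*} [NormedAddCommGroup E] [InnerProductSpace ℝ E]
    [CompleteSpace E] {f : E → ℝ} {m n : WithTop ℕ∞} (hf : ContDiff ℝ n f) (hmn : m + 1 ≤ n) :
    ContDiff ℝ m (gradient f) :=
  (InnerProductSpace.toDual ℝ E).symm.contDiff.comp (hf.fderiv_right hmn)

theorem exists_mem_Icc_mul_eq_integral {f : ℝ → ℝ} {r t : ℝ} (hrt : r < t)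
    (hf : ContinuousOn f (Icc r t)) : ∃ s ∈ Icc r t, (t - r) * f s = ∫ τ in r..t, f τ := by
  obtain ⟨s, hs, hs_eq⟩ := exists_eq_interval_average hrt.ne (uIcc_of_le hrt.le ▸ hf)
  rw [interval_average_eq_div, eq_div_iff (sub_ne_zero.2 hrt.ne'), mul_comm] at hs_eq
  exact ⟨s, Ioo_subset_Icc_self (uIoo_of_le hrt.le ▸ hs), hs_eq⟩

theorem abs_sub_le_maxW {W : ℝ → ℝ} {s t τ : ℝ} (hW : ContinuousOn W (Icc s t))
    (hτ : τ ∈ Icc s t) : |W τ - W t| ≤ maxW W s t :=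
  le_csSup (isCompact_Icc.image_of_continuousOn ((hW.sub continuousOn_const).abs)).bddAbove
    (mem_image_of_mem _ hτ)

section Lagrangian

variable {E : Type*} [NormedAddCommGroup E] [InnerProductSpace ℝ E]

noncomputable def lagrangian (b g x : E) (w : ℝ) : ℝ :=
  (1/2) * ‖x - b‖^2 + ⟪g, x⟫ * w - (1/2) * ‖b‖^2

variable {a m w : ℝ} {b g x : E}

theorem lagrangian_eq_inner (b g x : E) (w : ℝ) :
    lagrangian b g x w = (1/2) * ‖x‖^2 - ⟪x, b⟫ + ⟪g, x⟫ * w := by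
  rw [lagrangian, norm_sub_sq_real]; ring

theorem abs_inner_mul_le (hg : ‖g‖ ≤ a) (hw : |w| ≤ m) : |⟪g, x⟫ * w| ≤ a * ‖x‖ * m := by
  rw [abs_mul]
  exact mul_le_mul ((abs_real_inner_le_norm g x).trans (by gcongr)) hw (abs_nonneg w)
    (mul_nonneg ((norm_nonneg g).trans hg) (norm_nonneg x))

theorem sub_le_lagrangian (hb : ‖b‖ ≤ a) (hg : ‖g‖ ≤ a) (hw : |w| ≤ m) :
    a * (1 + m) * ‖x‖ - 2 * (a * (1 + m))^2 ≤ lagrangian b g x w := by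
  have hxb : ⟪x, b⟫ ≤ a * ‖x‖ :=
    (real_inner_le_norm x b).trans (by rw [mul_comm]; gcongr)
  have hgxw := neg_abs_le (⟪g, x⟫ * w) |>.trans' (neg_le_neg (abs_inner_mul_le hg hw))
  rw [lagrangian_eq_inner]
  nlinarith [sq_nonneg (‖x‖ - 2 * (a * (1 + m)))]

theorem abs_lagrangian_le (hx : ‖x‖ ≤ a) (hb : ‖b‖ ≤ a) (hg : ‖g‖ ≤ a) (hw : |w| ≤ m) :
    |lagrangian b g x w| ≤ 2 * a^2 + a^2 * m := by
  have hxb : |⟪x, b⟫| ≤ a * a :=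
    (abs_real_inner_le_norm x b).trans (mul_le_mul hx hb (norm_nonneg b) ((norm_nonneg x).trans hx))
  have hgxw := abs_inner_mul_le hg hw (x := x)
  have hx2 : ‖x‖^2 ≤ a^2 := pow_le_pow_left₀ (norm_nonneg x) hx 2
  have hxm : a * ‖x‖ * m ≤ a^2 * m := by
    have : 0 ≤ m := (abs_nonneg w).trans hw
    have : 0 ≤ a := (norm_nonneg b).trans hb
    rw [sq]; gcongr
  rw [abs_le] at hxb hgxw ⊢
  rw [lagrangian_eq_inner]
  constructor <;> nlinarith [norm_nonneg x]

end Lagrangian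

section Curves

variable {d : ℕ} {F : EuclideanSpace ℝ (Fin d) → ℝ} {W : ℝ → ℝ} {b : EuclideanSpace ℝ (Fin d)}
  {γ γ' : ℝ → EuclideanSpace ℝ (Fin d)} {a m r s t : ℝ}

theorem IsACWith.continuousOn (h : IsACWith γ γ' s t) (hst : s ≤ t) :
    ContinuousOn γ (Icc s t) := by
  have hprim : ContinuousOn (fun τ => ∫ u in s..τ, γ' u) (Icc s t) := by
    rw [← uIcc_of_le hst]
    exact intervalIntegral.continuousOn_primitive_interval
      ((intervalIntegrable_iff_integrableOn_Icc_of_le hst).mp h.1 |>.mono_set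
        (uIcc_of_le hst).subset)
  exact (continuousOn_const.add hprim).congr h.2

theorem isACWith_affine (x v : EuclideanSpace ℝ (Fin d)) (s t : ℝ) :
    IsACWith (fun τ => x + (τ - s) • v) (fun _ => v) s t := by
  refine ⟨intervalIntegrable_const, fun τ _ => ?_⟩
  simp [intervalIntegral.integral_const]

theorem exists_isIntVec_sub_norm_le (x : EuclideanSpace ℝ (Fin d)) :
    ∃ v : EuclideanSpace ℝ (Fin d), IsIntVec (v - x) ∧ ‖v‖ ≤ √d / 2 := by
  refine ⟨WithLp.toLp 2 fun i => x i - round (x i), fun i => ⟨-round (x i), ?_⟩, ?_⟩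
  · simp
  · have hsq : ‖WithLp.toLp 2 fun i => x i - round (x i)‖ ^ 2 ≤ (√d / 2) ^ 2 := by
      rw [EuclideanSpace.norm_sq_eq, div_pow, sq_sqrt d.cast_nonneg]
      calc ∑ i, ‖x i - round (x i)‖ ^ 2 ≤ ∑ _i : Fin d, (1 / 2 : ℝ) ^ 2 := by
            gcongr with i
            exact (Real.norm_eq_abs _).trans_le (abs_sub_round _)
        _ = d / 2 ^ 2 := by simp; ring
    exact le_of_sq_le_sq hsq (by positivity)

theorem actionB_eq_integral_lagrangian :
    actionB F W b γ γ' s t =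
      (∫ τ in s..t, lagrangian b (gradient F (γ τ)) (γ' τ) (W τ - W t)) - F (γ s) * (W t - W s) :=
  rfl

theorem abs_mul_sub_le (hF0 : ∀ x, |F x| ≤ a) (hW : ∀ τ ∈ Icc s t, |W τ - W t| ≤ m)
    (hst : s ≤ t) (x : EuclideanSpace ℝ (Fin d)) : |F x * (W t - W s)| ≤ a * m := by
  rw [abs_mul, abs_sub_comm]
  exact mul_le_mul (hF0 x) (hW s ⟨le_rfl, hst⟩) (abs_nonneg _) ((abs_nonneg _).trans (hF0 x))

theorem actionB_affine_le (hF0 : ∀ x, |F x| ≤ a) (hF1 : ∀ x, ‖gradient F x‖ ≤ a) (hb : ‖b‖ ≤ a)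
    (hW : ∀ τ ∈ Icc s t, |W τ - W t| ≤ m) (hst : s ≤ t) (x : EuclideanSpace ℝ (Fin d))
    {v : EuclideanSpace ℝ (Fin d)} (hv : ‖v‖ ≤ a) :
    actionB F W b (fun τ => x + (τ - s) • v) (fun _ => v) s t ≤
      (2 * a^2 + a^2 * m) * (t - s) + a * m := by
  have hint : ‖∫ τ in s..t, lagrangian b (gradient F (x + (τ - s) • v)) v (W τ - W t)‖
      ≤ (2 * a^2 + a^2 * m) * |t - s| := by
    refine intervalIntegral.norm_integral_le_of_norm_le_const fun τ hτ => ?_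
    rw [uIoc_of_le hst] at hτ
    exact abs_lagrangian_le hv hb (hF1 _) (hW τ (Ioc_subset_Icc_self hτ))
  rw [Real.norm_eq_abs, abs_of_nonneg (sub_nonneg.2 hst)] at hint
  simp only [actionB_eq_integral_lagrangian, sub_self, zero_smul, add_zero]
  linarith [le_abs_self (∫ τ in s..t, lagrangian b (gradient F (x + (τ - s) • v)) v (W τ - W t)),
    neg_abs_le (F x * (W t - W s)), abs_mul_sub_le hF0 hW hst x]

theorem le_actionB (hF0 : ∀ x, |F x| ≤ a) (hF1 : ∀ x, ‖gradient F x‖ ≤ a) (hb : ‖b‖ ≤ a)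
    (hW : ∀ τ ∈ Icc s t, |W τ - W t| ≤ m) (hst : s ≤ t) (hgrad : Continuous (gradient F))
    (hWc : ContinuousOn W (Icc s t)) (hγ : ContinuousOn γ (Icc s t))
    (hγ' : ContinuousOn γ' (Icc s t)) :
    a * (1 + m) * (∫ τ in s..t, ‖γ' τ‖) - (2 * (a * (1 + m))^2 * (t - s) + a * m) ≤
      actionB F W b γ γ' s t := by
  set c := a * (1 + m)
  have hnorm : IntervalIntegrable (fun τ => ‖γ' τ‖) volume s t :=
    hγ'.norm.intervalIntegrable_of_Icc hst
  have hL : IntervalIntegrable (fun τ => lagrangian b (gradient F (γ τ)) (γ' τ) (W τ - W t))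
      volume s t := by
    refine ContinuousOn.intervalIntegrable_of_Icc hst ?_
    unfold lagrangian
    fun_prop
  have hint : c * (∫ τ in s..t, ‖γ' τ‖) - 2 * c^2 * (t - s) ≤
      ∫ τ in s..t, lagrangian b (gradient F (γ τ)) (γ' τ) (W τ - W t) := by
    have := intervalIntegral.integral_mono_on hst ((hnorm.const_mul c).sub intervalIntegrable_const)
      hL fun τ hτ => sub_le_lagrangian hb (hF1 (γ τ)) (hW τ hτ) (x := γ' τ)
    rw [intervalIntegral.integral_sub (hnorm.const_mul c) intervalIntegrable_const,
      intervalIntegral.integral_const_mul, intervalIntegral.integral_const, smul_eq_mul] at this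
    linarith
  rw [actionB_eq_integral_lagrangian]
  linarith [le_abs_self (F (γ s) * (W t - W s)), abs_mul_sub_le hF0 hW hst (γ s)]

def MinimizesActionModInt (F : EuclideanSpace ℝ (Fin d) → ℝ) (W : ℝ → ℝ)
    (b : EuclideanSpace ℝ (Fin d)) (γ γ' : ℝ → EuclideanSpace ℝ (Fin d)) (s t : ℝ) : Prop :=
  ∀ σ σ' : ℝ → EuclideanSpace ℝ (Fin d), IsACWith σ σ' s t →
    IsIntVec (σ s - γ s) → IsIntVec (σ t - γ t) →
    actionB F W b γ γ' s t ≤ actionB F W b σ σ' s t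

/-- The competitor is the segment from `γ (t-1)` to the point of `γ t + ℤ^d` nearest to it. -/
theorem MinimizesActionModInt.actionB_le (hmin : MinimizesActionModInt F W b γ γ' (t - 1) t)
    (hF0 : ∀ x, |F x| ≤ a) (hF1 : ∀ x, ‖gradient F x‖ ≤ a) (hb : ‖b‖ ≤ a)
    (hW : ∀ τ ∈ Icc (t - 1) t, |W τ - W t| ≤ m) (hd : √d / 2 ≤ a) :
    actionB F W b γ γ' (t - 1) t ≤ 2 * a^2 + a^2 * m + a * m := by
  obtain ⟨v, hv_int, hv⟩ := exists_isIntVec_sub_norm_le (γ t - γ (t - 1))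
  have hσ_start : IsIntVec ((γ (t - 1) + (t - 1 - (t - 1)) • v) - γ (t - 1)) :=
    fun _ => ⟨0, by simp⟩
  have hσ_end : IsIntVec ((γ (t - 1) + (t - (t - 1)) • v) - γ t) := by
    convert hv_int using 1
    rw [sub_sub_cancel, one_smul]
    abel
  have := actionB_affine_le hF0 hF1 hb hW (sub_le_self t zero_le_one) (γ (t - 1)) (hv.trans hd)
  rw [sub_sub_cancel, mul_one] at this
  exact (hmin _ _ (isACWith_affine _ v _ t) hσ_start hσ_end).trans this

theorem MinimizesActionModInt.integral_norm_le (hmin : MinimizesActionModInt F W b γ γ' (t - 1) t)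
    (hAC : IsACWith γ γ' (t - 1) t) (hγ' : ContinuousOn γ' (Icc (t - 1) t))
    (hgrad : Continuous (gradient F)) (hWc : ContinuousOn W (Icc (t - 1) t))
    (hF0 : ∀ x, |F x| ≤ a) (hF1 : ∀ x, ‖gradient F x‖ ≤ a) (hb : ‖b‖ ≤ a)
    (hW : ∀ τ ∈ Icc (t - 1) t, |W τ - W t| ≤ m) (hd : √d / 2 ≤ a) (ha : 1 ≤ a) :
    ∫ τ in (t - 1)..t, ‖γ' τ‖ ≤ 2 * a * (3 + m) := by
  have hst : t - 1 ≤ t := sub_le_self t zero_le_one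
  have hm : 0 ≤ m := (abs_nonneg _).trans (hW t ⟨hst, le_rfl⟩)
  have hlower := le_actionB hF0 hF1 hb hW hst hgrad hWc (hAC.continuousOn hst) hγ'
  have hupper := hmin.actionB_le hF0 hF1 hb hW hd
  rw [sub_sub_cancel, mul_one] at hlower
  have hc : 0 < a * (1 + m) := by positivity
  refine le_of_mul_le_mul_left ?_ hc
  nlinarith [mul_le_mul_of_nonneg_right ha (mul_nonneg hm (by positivity : (0:ℝ) ≤ a))]

theorem norm_deriv_le_of_eulerLagrange (hs : s ∈ Icc r t)
    (hEL : γ' t = γ' s + (∫ τ in s..t, (W τ - W t) • fderiv ℝ (gradient F) (γ τ) (γ' τ))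
      + (W s - W t) • gradient F (γ s))
    (hF1 : ∀ x, ‖gradient F x‖ ≤ a) (hF2 : ∀ x, ‖fderiv ℝ (gradient F) x‖ ≤ a)
    (hW : ∀ τ ∈ Icc r t, |W τ - W t| ≤ m) (hγ' : ContinuousOn γ' (Icc r t)) :
    ‖γ' t‖ ≤ ‖γ' s‖ + a * m * (∫ τ in r..t, ‖γ' τ‖) + a * m := by
  have hm : 0 ≤ m := (abs_nonneg _).trans (hW t ⟨hs.1.trans hs.2, le_rfl⟩)
  have hnorm : IntervalIntegrable (fun τ => ‖γ' τ‖) volume r t :=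
    hγ'.norm.intervalIntegrable_of_Icc (hs.1.trans hs.2)
  have hint : ‖∫ τ in s..t, (W τ - W t) • fderiv ℝ (gradient F) (γ τ) (γ' τ)‖ ≤
      a * m * ∫ τ in r..t, ‖γ' τ‖ := by
    have ha : 0 ≤ a := (norm_nonneg _).trans (hF1 0)
    rw [← intervalIntegral.integral_const_mul]
    calc _ ≤ ∫ τ in s..t, a * m * ‖γ' τ‖ := by
          refine intervalIntegral.norm_integral_le_of_norm_le hs.2 (ae_of_all _ fun τ hτ => ?_)
            ((hnorm.mono_set ?_).const_mul _)
          · rw [norm_smul, Real.norm_eq_abs, mul_comm a, mul_assoc]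
            exact mul_le_mul (hW τ ⟨hs.1.trans hτ.1.le, hτ.2⟩)
              (((fderiv ℝ (gradient F) (γ τ)).le_opNorm _).trans (by gcongr; exact hF2 _))
              (norm_nonneg _) hm
          · rw [uIcc_of_le hs.2, uIcc_of_le (hs.1.trans hs.2)]
            exact Icc_subset_Icc_left hs.1
      _ ≤ ∫ τ in r..t, a * m * ‖γ' τ‖ :=
          intervalIntegral.integral_mono_interval hs.1 hs.2 le_rfl
            (ae_of_all _ fun τ => by positivity) (hnorm.const_mul _)
  have hbdry : ‖(W s - W t) • gradient F (γ s)‖ ≤ a * m := by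
    rw [norm_smul, Real.norm_eq_abs, mul_comm]
    exact mul_le_mul (hF1 _) (hW s hs) (abs_nonneg _) ((norm_nonneg _).trans (hF1 0))
  rw [hEL]
  exact norm_add₃_le.trans (by linarith)

end Curves

theorem minimizer_endpoint_velocity_bound_periodic_general (d : ℕ) (C₀ C₁ C₂ B : ℝ) :
    ∃ c : ℝ, 0 < c ∧
      ∀ b : EuclideanSpace ℝ (Fin d), ‖b‖ = B →
      ∀ F : EuclideanSpace ℝ (Fin d) → ℝ, ContDiff ℝ 2 F →
        (∀ (x v : EuclideanSpace ℝ (Fin d)), IsIntVec v → F (x + v) = F x) →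
        (∀ x, |F x| ≤ C₀) → (∀ x, ‖gradient F x‖ ≤ C₁) →
        (∀ x, ‖fderiv ℝ (gradient F) x‖ ≤ C₂) →
      ∀ W : ℝ → ℝ, Continuous W →
      ∀ t : ℝ, ∀ γ γ' : ℝ → EuclideanSpace ℝ (Fin d),
        IsACWith γ γ' (t-1) t →
        ContinuousOn γ' (Set.Icc (t-1) t) →
        -- `γ` minimizes the action with fixed endpoints modulo `ℤ^d`
        (∀ σ σ' : ℝ → EuclideanSpace ℝ (Fin d), IsACWith σ σ' (t-1) t →
          IsIntVec (σ (t-1) - γ (t-1)) → IsIntVec (σ t - γ t) →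
          actionB F W b γ γ' (t-1) t ≤ actionB F W b σ σ' (t-1) t) →
        -- the Euler–Lagrange identity
        (∀ s ∈ Set.Icc (t-1) t,
          γ' t = γ' s + (∫ τ in s..t, (W τ - W t) • fderiv ℝ (gradient F) (γ τ) (γ' τ))
            + (W s - W t) • gradient F (γ s)) →
        ‖γ' t‖ ≤ c * (1 + (maxW W (t-1) t)^2) := by
  obtain ⟨a, hB, h₀, h₁, h₂, hd, ha⟩ : ∃ a : ℝ, |B| ≤ a ∧ |C₀| ≤ a ∧ |C₁| ≤ a ∧ |C₂| ≤ a ∧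
      √d / 2 ≤ a ∧ 1 ≤ a :=
    ⟨1 + |B| + |C₀| + |C₁| + |C₂| + √d, by
      refine ⟨?_, ?_, ?_, ?_, ?_, ?_⟩ <;>
        linarith [abs_nonneg B, abs_nonneg C₀, abs_nonneg C₁, abs_nonneg C₂, sqrt_nonneg d]⟩
  refine ⟨11 * a^2, by positivity, ?_⟩
  intro b hb F hF _ hF0 hF1 hF2 W hW t γ γ' hAC hγ' hmin hEL
  set m := maxW W (t-1) t
  have hW' : ∀ τ ∈ Icc (t-1) t, |W τ - W t| ≤ m := fun τ hτ => abs_sub_le_maxW hW.continuousOn hτ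
  have hm : 0 ≤ m := (abs_nonneg _).trans (hW' t ⟨by linarith, le_rfl⟩)
  have hb' : ‖b‖ ≤ a := hb ▸ (le_abs_self B).trans hB
  have hF0' x : |F x| ≤ a := (hF0 x).trans ((le_abs_self C₀).trans h₀)
  have hF1' x : ‖gradient F x‖ ≤ a := (hF1 x).trans ((le_abs_self C₁).trans h₁)
  have hF2' x : ‖fderiv ℝ (gradient F) x‖ ≤ a := (hF2 x).trans ((le_abs_self C₂).trans h₂)
  have hL := MinimizesActionModInt.integral_norm_le hmin hAC hγ'
    (hF.gradient (m := 1) (by norm_num)).continuous hW.continuousOn hF0' hF1' hb' hW' hd ha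
  obtain ⟨s, hs, hs_eq⟩ := exists_mem_Icc_mul_eq_integral (sub_one_lt t) hγ'.norm
  rw [sub_sub_cancel, one_mul] at hs_eq
  have hγ't := norm_deriv_le_of_eulerLagrange hs (hEL s hs) hF1' hF2' hW' hγ'
  have ham : 0 ≤ a * m := by positivity
  nlinarith [mul_le_mul_of_nonneg_left hL ham, mul_le_mul_of_nonneg_right ha ham,
    mul_le_mul_of_nonneg_right ha (by positivity : 0 ≤ a * m ^ 2), sq_nonneg (m - 1)]

/-- If `γ : [t-1, t] → ℝ^d` is a continuously differentiable minimizer of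
`A^{W,b}_{t-1,t}` with fixed endpoints modulo `ℤ^d` satisfying the Euler–Lagrange identity
`γ̇(t) = γ̇(s) + ∫_s^t ∇²F(γ(τ)) γ̇(τ) (W(τ) - W(t)) dτ + ∇F(γ(s)) (W(s) - W(t))`
for all `s ∈ [t-1, t]`, then `|γ̇(t)| ≤ c (1 + max_{t-1 ≤ τ ≤ t} |W(τ) - W(t)|²)` for
a constant `c > 0` depending only on `d, |b|, C₀, C₁, C₂`. -/
theorem minimizer_endpoint_velocity_bound_periodic (d : ℕ) (hd : 1 ≤ d) (C₀ C₁ C₂ B : ℝ) :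
    ∃ c : ℝ, 0 < c ∧
      ∀ b : EuclideanSpace ℝ (Fin d), ‖b‖ = B →
      ∀ F : EuclideanSpace ℝ (Fin d) → ℝ, ContDiff ℝ 2 F →
        (∀ (x v : EuclideanSpace ℝ (Fin d)), IsIntVec v → F (x + v) = F x) →
        (∀ x, |F x| ≤ C₀) → (∀ x, ‖gradient F x‖ ≤ C₁) →
        (∀ x, ‖fderiv ℝ (gradient F) x‖ ≤ C₂) →
      ∀ W : ℝ → ℝ, Continuous W →
      ∀ t : ℝ, ∀ γ γ' : ℝ → EuclideanSpace ℝ (Fin d),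
        IsACWith γ γ' (t-1) t →
        ContinuousOn γ' (Set.Icc (t-1) t) →
        -- `γ` minimizes the action with fixed endpoints modulo `ℤ^d`
        (∀ σ σ' : ℝ → EuclideanSpace ℝ (Fin d), IsACWith σ σ' (t-1) t →
          IsIntVec (σ (t-1) - γ (t-1)) → IsIntVec (σ t - γ t) →
          actionB F W b γ γ' (t-1) t ≤ actionB F W b σ σ' (t-1) t) →
        -- the Euler–Lagrange identity
        (∀ s ∈ Set.Icc (t-1) t,
          γ' t = γ' s + (∫ τ in s..t, (W τ - W t) • fderiv ℝ (gradient F) (γ τ) (γ' τ))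
            + (W s - W t) • gradient F (γ s)) →
        ‖γ' t‖ ≤ c * (1 + (maxW W (t-1) t)^2) :=
  minimizer_endpoint_velocity_bound_periodic_general d C₀ C₁ C₂ B
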